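/- Let n be a nonnegative integer, let α > -1 and let k > 0 be real with (k+1)α > -1. Then the Krein-like moment of the Laguerre Rakhmanov density satisfies ∫₀^∞ x^{(k+1)α} e^{-(k+1)x} [L_n^{(α)}(x)]² dx = (k+1)^{-(k+1)α−1} Γ((k+1)α+1) C(n+α, n)² · F₂((k+1)α+1; −n, −n; α+1, α+1; 1/(k+1), 1/(k+1)). -/

import Mathlib

open MeasureTheory Finset Real

/-- Pochhammer symbol `(a)_k = a (a+1) ⋯ (a+k-1)`. -/
noncomputable def poch (a : ℝ) (k : ℕ) : ℝ := ∏ i ∈ Finset.range k, (a + i)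

/-- Generalized binomial coefficient `C(a, j) = (a-j+1)_j / j!`. -/
noncomputable def gbinom (a : ℝ) (j : ℕ) : ℝ := poch (a - j + 1) j / (j.factorial : ℝ)

/-- Generalized Laguerre polynomial `L_n^{(α)}`. -/
noncomputable def Lag (α : ℝ) (n : ℕ) (x : ℝ) : ℝ :=
  ∑ i ∈ Finset.range (n + 1),
    ((-1 : ℝ) ^ i / (i.factorial : ℝ)) * gbinom ((n : ℝ) + α) (n - i) * x ^ i

/-- Physicists' Hermite polynomial `H_n`. -/
noncomputable def Herm (n : ℕ) (x : ℝ) : ℝ :=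
  ∑ k ∈ Finset.range (n / 2 + 1),
    ((-1 : ℝ) ^ k * (n.factorial : ℝ) / ((k.factorial : ℝ) * ((n - 2 * k).factorial : ℝ))) *
      (2 * x) ^ (n - 2 * k)

/-- Jacobi polynomial `P_n^{(α,γ)}`. -/
noncomputable def Jac (α γ : ℝ) (n : ℕ) (x : ℝ) : ℝ :=
  ∑ k ∈ Finset.range (n + 1),
    gbinom ((n : ℝ) + α) (n - k) * gbinom ((n : ℝ) + γ) k *
      ((x - 1) / 2) ^ k * ((x + 1) / 2) ^ (n - k)

/-- Terminating Lauricella function of type A. -/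
noncomputable def lauricellaA {r : ℕ} (a : ℝ) (m : Fin r → ℕ) (c x : Fin r → ℝ) : ℝ :=
  ∑ j ∈ Fintype.piFinset (fun i => Finset.range (m i + 1)),
    poch a (∑ i, j i) *
      ∏ i, (poch (-(m i : ℝ)) (j i) / (poch (c i) (j i) * ((j i).factorial : ℝ)) * x i ^ (j i))

/-- Terminating Gauss hypergeometric sum `₂F₁(-k, b; c; x)`. -/
noncomputable def hyp2F1 (k : ℕ) (b c x : ℝ) : ℝ :=
  ∑ j ∈ Finset.range (k + 1),
    poch (-(k : ℝ)) j * poch b j / (poch c j * (j.factorial : ℝ)) * x ^ j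

/-- Terminating hypergeometric sum `₃F₂(-k, b₁, b₂; c₁, c₂; x)`. -/
noncomputable def hyp3F2 (k : ℕ) (b₁ b₂ c₁ c₂ x : ℝ) : ℝ :=
  ∑ j ∈ Finset.range (k + 1),
    poch (-(k : ℝ)) j * poch b₁ j * poch b₂ j /
      (poch c₁ j * poch c₂ j * (j.factorial : ℝ)) * x ^ j

/-- Gauss hypergeometric series `₂F₁(a, b; c; x)` (a terminating series when `a` or `b`
is a nonpositive integer). -/
noncomputable def hypSum (a b c x : ℝ) : ℝ :=
  ∑' j : ℕ, poch a j * poch b j / (poch c j * (j.factorial : ℝ)) * x ^ j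

/-- Terminating Appell function `F₂(a; -m₁, -m₂; c₁, c₂; x₁, x₂)`. -/
noncomputable def appellF2 (a : ℝ) (m₁ m₂ : ℕ) (c₁ c₂ x₁ x₂ : ℝ) : ℝ :=
  ∑ j₁ ∈ Finset.range (m₁ + 1), ∑ j₂ ∈ Finset.range (m₂ + 1),
    poch a (j₁ + j₂) * poch (-(m₁ : ℝ)) j₁ * poch (-(m₂ : ℝ)) j₂ /
      (poch c₁ j₁ * poch c₂ j₂ * (j₁.factorial : ℝ) * (j₂.factorial : ℝ)) * x₁ ^ j₁ * x₂ ^ j₂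

/-- `1/z!` with the convention that it vanishes for negative integers `z`. -/
noncomputable def invFacZ (z : ℤ) : ℝ := if 0 ≤ z then ((z.toNat.factorial : ℕ) : ℝ)⁻¹ else 0

/-- Pochhammer symbol extended to integer index via `(a)_k = Γ(a+k)/Γ(a)` for negative `k`. -/
noncomputable def pochZ (a : ℝ) (k : ℤ) : ℝ :=
  if 0 ≤ k then poch a k.toNat else Real.Gamma (a + (k : ℝ)) / Real.Gamma a

/-!
Expanding the binomial coefficient gives `L_n^{(α)}(x) = C(n+α, n) Σ_i (-n)_i / ((α+1)_i i!) x^i`,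
so the squared Laguerre polynomial is a double sum of monomials `x^(i+j)`. Against the weight
`x^β e^(-s x)` each monomial integrates to `s^(-β-1) Γ(β+1) (β+1)_(i+j) s^(-(i+j))`, and the
resulting double sum is term by term the Appell series `F₂(β+1; -n, -n; α+1, α+1; 1/s, 1/s)`.
-/

open scoped Nat

lemma poch_succ (a : ℝ) (m : ℕ) : poch a (m + 1) = poch a m * (a + m) :=
  prod_range_succ _ _

lemma poch_add (a : ℝ) (m l : ℕ) : poch a (m + l) = poch a m * poch (a + m) l := by
  rw [poch, poch, poch, prod_range_add]
  congr 1
  exact prod_congr rfl fun i _ => by push_cast; ring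

lemma poch_pos {a : ℝ} (ha : 0 < a) (m : ℕ) : 0 < poch a m :=
  prod_pos fun _ _ => by positivity

lemma Gamma_add_natCast {a : ℝ} (ha : 0 < a) (m : ℕ) :
    Gamma (a + m) = Gamma a * poch a m := by
  induction m with
  | zero => simp [poch]
  | succ m ih =>
    rw [Nat.cast_succ, ← add_assoc, Gamma_add_one (by positivity), ih, poch_succ]
    ring

lemma poch_neg_natCast {n i : ℕ} (h : i ≤ n) :
    poch (-n) i = (-1) ^ i * n ! / (n - i)! := by
  induction i with
  | zero => simp [poch, Nat.factorial_ne_zero n]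
  | succ i ih =>
    have hfac : ((n - i)! : ℝ) = (n - i : ℝ) * (n - (i + 1))! := by
      rw [show n - i = n - (i + 1) + 1 by omega, Nat.factorial_succ]
      push_cast [Nat.cast_sub h]
      ring
    have hne : (n - i : ℝ) ≠ 0 := sub_ne_zero.2 (by exact_mod_cast (by omega : n ≠ i))
    rw [poch_succ, ih (by omega), hfac]
    field_simp
    ring

/-- Both sides equal `(-n)_i (a+1)_n / n!`. -/
lemma neg_one_pow_mul_gbinom_mul_poch (a : ℝ) {n i : ℕ} (hi : i ≤ n) :
    (-1) ^ i * gbinom (n + a) (n - i) * poch (a + 1) i = gbinom (n + a) n * poch (-n) i := by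
  have hsplit : poch (a + 1) n = poch (a + 1) i * poch (a + 1 + i) (n - i) := by
    rw [← poch_add, Nat.add_sub_cancel' hi]
  rw [gbinom, gbinom, Nat.cast_sub hi, poch_neg_natCast hi,
    show (n : ℝ) + a - (n - i) + 1 = a + 1 + i by ring,
    show (n : ℝ) + a - n + 1 = a + 1 by ring, hsplit]
  field_simp

lemma Lag_eq_sum {α : ℝ} (hα : -1 < α) (n : ℕ) (x : ℝ) :
    Lag α n x = ∑ i ∈ range (n + 1),
      gbinom (n + α) n * poch (-n) i / (poch (α + 1) i * i !) * x ^ i := by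
  refine sum_congr rfl fun i hi => ?_
  have hpoch := (poch_pos (by linarith : 0 < α + 1) i).ne'
  rw [← neg_one_pow_mul_gbinom_mul_poch α (Nat.lt_succ_iff.mp (mem_range.mp hi))]
  field_simp

section GammaWeight

variable {β s : ℝ}

lemma rpow_mul_exp_mul_pow_eq {x : ℝ} (hx : 0 < x) (m : ℕ) :
    x ^ β * exp (-s * x) * x ^ m = x ^ (β + m) * exp (-s * x) := by
  rw [mul_right_comm, ← rpow_natCast x m, ← rpow_add hx]

lemma integrableOn_rpow_mul_exp_mul_pow (hβ : -1 < β) (hs : 0 < s) (m : ℕ) :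
    IntegrableOn (fun x => x ^ β * exp (-s * x) * x ^ m) (Set.Ioi 0) := by
  have hβm : -1 < β + m := by have := m.cast_nonneg (α := ℝ); linarith
  refine (integrableOn_rpow_mul_exp_neg_mul_rpow hβm one_pos hs).congr_fun
    (fun x hx => ?_) measurableSet_Ioi
  simp only [rpow_mul_exp_mul_pow_eq hx, rpow_one]

lemma integral_rpow_mul_exp_mul_pow (hβ : -1 < β) (hs : 0 < s) (m : ℕ) :
    ∫ x in Set.Ioi 0, x ^ β * exp (-s * x) * x ^ m =
      s ^ (-β - 1) * Gamma (β + 1) * poch (β + 1) m * (1 / s) ^ m := by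
  have hβ1 : 0 < β + 1 := by linarith
  calc ∫ x in Set.Ioi 0, x ^ β * exp (-s * x) * x ^ m
      = ∫ x in Set.Ioi 0, x ^ (β + 1 + m - 1) * exp (-(s * x)) :=
        setIntegral_congr_fun measurableSet_Ioi fun x hx => by
          rw [rpow_mul_exp_mul_pow_eq hx, neg_mul]; ring_nf
    _ = (1 / s) ^ (β + 1 + m) * Gamma (β + 1 + m) :=
        integral_rpow_mul_exp_neg_mul_Ioi (by positivity) hs
    _ = s ^ (-β - 1) * Gamma (β + 1) * poch (β + 1) m * (1 / s) ^ m := by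
        rw [Gamma_add_natCast hβ1, rpow_add (by positivity), rpow_natCast, one_div,
          inv_rpow hs.le, ← rpow_neg hs.le, neg_add']
        ring

lemma integral_rpow_mul_exp_mul_sum_sq (hβ : -1 < β) (hs : 0 < s) (c : ℕ → ℝ) (N : ℕ) :
    ∫ x in Set.Ioi 0, x ^ β * exp (-s * x) * (∑ i ∈ range N, c i * x ^ i) ^ 2 =
      ∑ i ∈ range N, ∑ j ∈ range N,
        c i * c j * ∫ x in Set.Ioi 0, x ^ β * exp (-s * x) * x ^ (i + j) := by
  have hexpand : ∀ x, x ^ β * exp (-s * x) * (∑ i ∈ range N, c i * x ^ i) ^ 2 =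
      ∑ i ∈ range N, ∑ j ∈ range N, c i * c j * (x ^ β * exp (-s * x) * x ^ (i + j)) := by
    intro x
    rw [sq, sum_mul_sum]
    simp only [mul_sum, pow_add]
    exact sum_congr rfl fun i _ => sum_congr rfl fun j _ => by ring
  have hint : ∀ i j, IntegrableOn
      (fun x => c i * c j * (x ^ β * exp (-s * x) * x ^ (i + j))) (Set.Ioi 0) :=
    fun i j => (integrableOn_rpow_mul_exp_mul_pow hβ hs (i + j)).const_mul _
  simp_rw [hexpand]
  rw [integral_finsetSum _ fun i _ => integrable_finsetSum _ fun j _ => hint i j]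
  refine sum_congr rfl fun i _ => ?_
  rw [integral_finsetSum _ fun j _ => hint i j]
  simp_rw [integral_const_mul]

end GammaWeight

/-- Krein-like moment of the Laguerre Rakhmanov density. -/
theorem laguerre_krein_moment (n : ℕ) (α k : ℝ) (hα : -1 < α) (hk : 0 < k)
    (hkα : -1 < (k + 1) * α) :
    ∫ x in Set.Ioi (0 : ℝ), x ^ ((k + 1) * α) * Real.exp (-(k + 1) * x) * (Lag α n x) ^ 2 =
      (k + 1) ^ (-(k + 1) * α - 1) * Real.Gamma ((k + 1) * α + 1) *
        gbinom ((n : ℝ) + α) n ^ 2 *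
        appellF2 ((k + 1) * α + 1) n n (α + 1) (α + 1) (1 / (k + 1)) (1 / (k + 1)) := by
  have hs : 0 < k + 1 := by linarith
  simp_rw [Lag_eq_sum hα, integral_rpow_mul_exp_mul_sum_sq hkα hs,
    integral_rpow_mul_exp_mul_pow hkα hs, appellF2, mul_sum]
  refine sum_congr rfl fun i _ => sum_congr rfl fun j _ => ?_
  have hi := (poch_pos (by linarith : 0 < α + 1) i).ne'
  have hj := (poch_pos (by linarith : 0 < α + 1) j).ne'
  rw [pow_add, neg_mul]
  field_simp
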